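/- Let α∈(0,1). For all integers i,j with 1≤i≤j, ∑_{t=1}^{i} b_{i,t} b_{j,t} p_α(t) = (−1)^{i+j+1} p_α(i) p_α(j)·((j−α)^{(i)}/(−α)^{(i)} − 1); moreover (−1)^{i+j+1}(j−α)^{(i)}/(−α)^{(i)}·p_α(i)p_α(j) = ((−1)^{i+j}(i+j)!/(i!j!))·p_α(i+j), where b_{r,t}=(−1)^{r−t}(t−α)^{(r−t)}/(r−t)!. -/
import Mathlib

noncomputable section

/-- Rising factorial `(a)^(m) = a (a+1) ⋯ (a+m-1)` of a real number. -/
def risingFactorial (a : ℝ) : ℕ → ℝ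
  | 0 => 1
  | m + 1 => risingFactorial a m * (a + m)

/-- Sibuya probabilities `p_α(r) = α (1-α)^(r-1) / r!` for `r ≥ 1`. -/
def sibuya (α : ℝ) (r : ℕ) : ℝ :=
  α * risingFactorial (1 - α) (r - 1) / (Nat.factorial r : ℝ)

/-- The coefficients `b_{r,t} = (-1)^(r-t) (t-α)^(r-t) / (r-t)!` for `1 ≤ t ≤ r`. -/
def bCoef (α : ℝ) (r t : ℕ) : ℝ :=
  (-1 : ℝ) ^ (r - t) * risingFactorial ((t : ℝ) - α) (r - t) / (Nat.factorial (r - t) : ℝ)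

open Polynomial Finset

lemma rf_add (a : ℝ) (m n : ℕ) :
    risingFactorial a (m + n) = risingFactorial a m * risingFactorial (a + m) n := by
  induction n with
  | zero => simp [risingFactorial]
  | succ n ih =>
    show risingFactorial a ((m + n) + 1) = _
    rw [risingFactorial, ih, risingFactorial]
    push_cast
    ring

lemma rf_pos {a : ℝ} (ha : 0 < a) (m : ℕ) : 0 < risingFactorial a m := by
  induction m with
  | zero => norm_num [risingFactorial]
  | succ m ih =>
    rw [risingFactorial]
    have : (0:ℝ) ≤ m := Nat.cast_nonneg m
    exact mul_pos ih (by linarith)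

lemma rf_peel (a : ℝ) (m : ℕ) : risingFactorial a (m + 1) = a * risingFactorial (a + 1) m := by
  induction m with
  | zero => norm_num [risingFactorial]
  | succ m ih =>
    rw [show m + 1 + 1 = (m+1)+1 from rfl, risingFactorial, ih, risingFactorial]
    push_cast
    ring

lemma rf_smeval (a : ℝ) (m : ℕ) :
    risingFactorial a m = (descPochhammer ℤ m).smeval (a + m - 1) := by
  induction m generalizing a with
  | zero => simp [risingFactorial, descPochhammer_zero, smeval_one]
  | succ m ih =>
    rw [rf_peel, ih (a + 1), descPochhammer_succ_right, smeval_mul, smeval_sub, smeval_X,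
      smeval_natCast]
    push_cast
    ring_nf

lemma smeval_eq_evalR (x : ℝ) (k : ℕ) :
    (descPochhammer ℤ k).smeval x = (descPochhammer ℝ k).eval x := by
  induction k with
  | zero => simp [descPochhammer_zero, smeval_one]
  | succ k ih =>
    rw [descPochhammer_succ_right, descPochhammer_succ_right, smeval_mul, smeval_sub,
      smeval_X, smeval_natCast, eval_mul, eval_sub, eval_X, eval_natCast, ih]
    push_cast
    ring

lemma vander (α : ℝ) (i j : ℕ) :
    ∑ t ∈ range (i + 1),
      (i.choose t : ℝ) * (j.descFactorial t : ℝ) * risingFactorial ((t : ℝ) - α) (i - t) =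
      risingFactorial ((j : ℝ) - α) i := by
  have h := Ring.descPochhammer_smeval_add (R := ℝ) (r := (j : ℝ)) (s := (i : ℝ) - 1 - α) i
    (Commute.all _ _)
  rw [Finset.Nat.sum_antidiagonal_eq_sum_range_succ_mk] at h
  have hL : risingFactorial ((j : ℝ) - α) i =
      (descPochhammer ℤ i).smeval ((j : ℝ) + ((i : ℝ) - 1 - α)) := by
    rw [rf_smeval]; ring_nf
  rw [hL, h]
  refine Finset.sum_congr rfl fun t ht => ?_
  have hti : t ≤ i := Nat.lt_succ_iff.mp (Finset.mem_range.mp ht)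
  have h1 : (descPochhammer ℤ t).smeval ((j : ℝ)) = (j.descFactorial t : ℝ) := by
    rw [smeval_eq_evalR, descPochhammer_eval_eq_descFactorial]
  have h2 : (descPochhammer ℤ (i - t)).smeval ((i : ℝ) - 1 - α) =
      risingFactorial ((t : ℝ) - α) (i - t) := by
    rw [rf_smeval]
    congr 1
    rw [Nat.cast_sub hti]
    ring
  rw [h1, h2]
  ring

lemma key_sum (α : ℝ) (i j : ℕ) (hi : 1 ≤ i) :
    ∑ t ∈ Icc 1 i,
      (i.choose t : ℝ) * (j.descFactorial t : ℝ) * risingFactorial ((t : ℝ) - α) (i - t) =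
      risingFactorial ((j : ℝ) - α) i - risingFactorial (-α) i := by
  have hr : range (i + 1) = insert 0 (Icc 1 i) := by
    ext x; simp [Finset.mem_range, Finset.mem_Icc]; omega
  have h0 : (0 : ℕ) ∉ Icc 1 i := by simp
  have hv := vander α i j
  rw [hr, Finset.sum_insert h0] at hv
  have hz : (i.choose 0 : ℝ) * (j.descFactorial 0 : ℝ) *
      risingFactorial (((0 : ℕ) : ℝ) - α) (i - 0) = risingFactorial (-α) i := by
    simp
  rw [hz] at hv
  linarith

lemma term_eq (α : ℝ) (t i j : ℕ)
    (ht : 1 ≤ t) (hti : t ≤ i) (hij : i ≤ j) :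
    bCoef α i t * bCoef α j t * sibuya α t =
      ((-1 : ℝ) ^ (i + j) * α * risingFactorial (1 - α) (j - 1) /
          ((Nat.factorial i : ℝ) * (Nat.factorial j : ℝ))) *
        ((i.choose t : ℝ) * (j.descFactorial t : ℝ) * risingFactorial ((t : ℝ) - α) (i - t)) := by
  obtain ⟨s, rfl⟩ : ∃ s, t = s + 1 := ⟨t - 1, by omega⟩
  obtain ⟨u, rfl⟩ : ∃ u, i = (s + 1) + u := ⟨i - (s + 1), by omega⟩
  obtain ⟨v, rfl⟩ : ∃ v, j = (s + 1) + v := ⟨j - (s + 1), by omega⟩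
  unfold bCoef sibuya
  rw [show (s + 1) + u - (s + 1) = u by omega, show (s + 1) + v - (s + 1) = v by omega,
    show (s + 1) + v - 1 = s + v by omega,
    show (s + 1) - 1 = s by omega]
  have hc : (1 - α) + (s : ℝ) = ((s + 1 : ℕ) : ℝ) - α := by push_cast; ring
  have hBv : risingFactorial (1 - α) (s + v) =
      risingFactorial (1 - α) s * risingFactorial (((s + 1 : ℕ) : ℝ) - α) v := by
    rw [rf_add, hc]
  have h1 : ((((s+1)+u).choose (s+1) : ℕ) : ℝ) * (Nat.factorial (s+1) : ℝ) *
      (Nat.factorial u : ℝ) = (Nat.factorial ((s+1)+u) : ℝ) := by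
    have h1n := Nat.choose_mul_factorial_mul_factorial (Nat.le_add_right (s+1) u)
    rw [Nat.add_sub_cancel_left] at h1n
    exact_mod_cast congrArg (Nat.cast (R := ℝ)) h1n
  have h2 : (Nat.factorial v : ℝ) * ((((s+1)+v).descFactorial (s+1) : ℕ) : ℝ) =
      (Nat.factorial ((s+1)+v) : ℝ) := by
    have := Nat.factorial_mul_descFactorial (n := (s+1)+v) (k := s+1) (Nat.le_add_right _ _)
    rw [show (s+1)+v - (s+1) = v by omega] at this
    exact_mod_cast congrArg (Nat.cast (R := ℝ)) this
  have hsign : (-1 : ℝ) ^ ((s+1)+u + ((s+1)+v)) = (-1 : ℝ) ^ u * (-1 : ℝ) ^ v := by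
    rw [show (s+1)+u+((s+1)+v) = 2*(s+1) + (u+v) by omega, pow_add, pow_mul]
    norm_num [pow_add]
  rw [hBv, hsign, ← h1, ← h2]
  have hC : (0:ℝ) < (((s+1)+u).choose (s+1) : ℝ) := by
    exact_mod_cast Nat.choose_pos (Nat.le_add_right (s+1) u)
  have hD : (0:ℝ) < ((((s+1)+v).descFactorial (s+1) : ℕ) : ℝ) := by
    have : ((s+1)+v).descFactorial (s+1) ≠ 0 := by
      rw [Ne, Nat.descFactorial_eq_zero_iff_lt]; omega
    exact_mod_cast Nat.pos_of_ne_zero this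
  have hfs : (Nat.factorial (s+1) : ℝ) ≠ 0 := by positivity
  have hfu : (Nat.factorial u : ℝ) ≠ 0 := by positivity
  have hfv : (Nat.factorial v : ℝ) ≠ 0 := by positivity
  set C := ((((s+1)+u).choose (s+1) : ℕ) : ℝ) with hCdef
  set D := ((((s+1)+v).descFactorial (s+1) : ℕ) : ℝ) with hDdef
  field_simp [hC.ne', hD.ne']

/-- For `1 ≤ i ≤ j`:
`∑_{t=1}^i b_{i,t} b_{j,t} p_α(t) = (-1)^(i+j+1) p_α(i) p_α(j) ((j-α)^(i)/(-α)^(i) - 1)`,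
and moreover
`(-1)^(i+j+1) (j-α)^(i)/(-α)^(i) p_α(i) p_α(j) = (-1)^(i+j) (i+j)!/(i!j!) p_α(i+j)`. -/
theorem sum_bCoef_mul_sibuya (α : ℝ) (hα0 : 0 < α) (hα1 : α < 1)
    (i j : ℕ) (hi : 1 ≤ i) (hij : i ≤ j) :
    (∑ t ∈ Finset.Icc 1 i, bCoef α i t * bCoef α j t * sibuya α t =
      (-1 : ℝ) ^ (i + j + 1) * sibuya α i * sibuya α j *
        (risingFactorial ((j : ℝ) - α) i / risingFactorial (-α) i - 1)) ∧
    (-1 : ℝ) ^ (i + j + 1) * (risingFactorial ((j : ℝ) - α) i / risingFactorial (-α) i) *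
        sibuya α i * sibuya α j =
      (-1 : ℝ) ^ (i + j) * (Nat.factorial (i + j) : ℝ) /
          ((Nat.factorial i : ℝ) * (Nat.factorial j : ℝ)) * sibuya α (i + j) := by
  have hj : 1 ≤ j := hi.trans hij
  have hβ : (0:ℝ) < 1 - α := by linarith
  have hαne : α ≠ 0 := ne_of_gt hα0
  have hA : risingFactorial (1 - α) (i - 1) ≠ 0 := (rf_pos hβ _).ne'
  have hB : risingFactorial (1 - α) (j - 1) ≠ 0 := (rf_pos hβ _).ne'
  have hfi : (Nat.factorial i : ℝ) ≠ 0 := by positivity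
  have hfj : (Nat.factorial j : ℝ) ≠ 0 := by positivity
  have hfij : (Nat.factorial (i + j) : ℝ) ≠ 0 := by positivity
  have hneg : risingFactorial (-α) i = -α * risingFactorial (1 - α) (i - 1) := by
    obtain ⟨m, rfl⟩ : ∃ m, i = 1 + m := ⟨i - 1, by omega⟩
    rw [rf_add, show 1 + m - 1 = m by omega]
    have h1 : risingFactorial (-α) 1 = -α := by norm_num [risingFactorial]
    have h2 : -α + ((1:ℕ):ℝ) = 1 - α := by push_cast; ring
    rw [h1, h2]
  have hBC : risingFactorial (1 - α) (i + j - 1) =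
      risingFactorial (1 - α) (j - 1) * risingFactorial ((j : ℝ) - α) i := by
    have h := rf_add (1 - α) (j - 1) i
    rw [show (j - 1) + i = i + j - 1 by omega] at h
    rw [h]
    congr 2
    rw [Nat.cast_sub hj]
    push_cast
    ring
  constructor
  · have hterm : ∑ t ∈ Finset.Icc 1 i, bCoef α i t * bCoef α j t * sibuya α t =
        ((-1 : ℝ) ^ (i + j) * α * risingFactorial (1 - α) (j - 1) /
            ((Nat.factorial i : ℝ) * (Nat.factorial j : ℝ))) *
          ∑ t ∈ Finset.Icc 1 i,
            (i.choose t : ℝ) * (j.descFactorial t : ℝ) * risingFactorial ((t : ℝ) - α) (i - t) := by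
      rw [Finset.mul_sum]
      refine Finset.sum_congr rfl fun t ht => ?_
      obtain ⟨ht1, ht2⟩ := Finset.mem_Icc.mp ht
      exact term_eq α t i j ht1 ht2 hij
    rw [hterm, key_sum α i j hi]
    unfold sibuya
    rw [hneg, pow_succ]
    field_simp
    ring
  · unfold sibuya
    rw [hBC, hneg, pow_succ]
    field_simp

end
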